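/- For the classical complete elliptic integrals (case a = 1/2), the function r ↦ r²·K(r)/(K(r) − E(r)) is strictly decreasing on (0,1), with limit 2 as r → 0⁺ and limit 1 as r → 1⁻. -/

import Mathlib

open Real Filter Set Topology

/-- Pochhammer symbol (rising factorial) for real `x`. -/
noncomputable def poch (x : ℝ) (n : ℕ) : ℝ := (ascPochhammer ℝ n).eval x

/-- Generalized complete elliptic integral of the first kind. -/
noncomputable def Ka (a r : ℝ) : ℝ :=
  (π / 2) * ∑' n : ℕ, (poch a n * poch (1 - a) n / (n.factorial : ℝ) ^ 2) * r ^ (2 * n)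

/-- Generalized complete elliptic integral of the second kind. -/
noncomputable def Ea (a r : ℝ) : ℝ :=
  (π / 2) * ∑' n : ℕ, (poch (a - 1) n * poch (1 - a) n / (n.factorial : ℝ) ^ 2) * r ^ (2 * n)

/-- Generalized Grötzsch ring function. -/
noncomputable def muG (a r : ℝ) : ℝ :=
  π / (2 * Real.sin (π * a)) * (Ka a (Real.sqrt (1 - r ^ 2)) / Ka a r)

/-- Generalized Hersch–Pfluger distortion function. -/
noncomputable def phiHP (a K r : ℝ) : ℝ := Function.invFun (muG a) (muG a r / K)

/-- The function mₐ(r). -/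
noncomputable def mA (a r : ℝ) : ℝ :=
  2 / (π * Real.sin (π * a)) * (1 - r ^ 2) * Ka a (Real.sqrt (1 - r ^ 2)) * Ka a r

/-- Digamma function (as the logarithmic derivative of Γ). -/
noncomputable def psiDG (x : ℝ) : ℝ := deriv (fun t => Real.log (Real.Gamma t)) x

/-- Ramanujan constant R(a). -/
noncomputable def RamanujanR (a : ℝ) : ℝ :=
  -2 * Real.eulerMascheroniConstant - psiDG a - psiDG (1 - a)

/-!
With `t = r²`, write `K(r) = (π/2) Σ kₙ tⁿ` and `K(r) - E(r) = (π/2) t Σ dₙ tⁿ`, where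
`kₙ = ((1/2)ₙ / n!)²` and, from `(-1/2)ₙ (2n - 1) = -(1/2)ₙ`, `dₙ = kₙ (2n + 1) / (2n + 2)`.
The function is then `Σ kₙ tⁿ / Σ dₙ tⁿ`. The coefficient ratio `kₙ / dₙ = 1 + 1/(2n + 1)` is
strictly decreasing, so the quotient of the series is strictly decreasing (Biernacki–Krzyż).
At `t = 0` it equals `k₀ / d₀ = 2`. As `t → 1⁻`, `Σ dₙ tⁿ → ∞` because `dₙ ≥ 1/(8(n + 1))`, whereas
`Σ (kₙ - dₙ) tⁿ` has a finite Abel limit because `kₙ - dₙ = kₙ / (2n + 2) ≤ 1/(n + 1)²`; hence the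
quotient `1 + Σ (kₙ - dₙ) tⁿ / Σ dₙ tⁿ` tends to `1`.
-/

theorem summable_mul_pow_of_abs_le {a : ℕ → ℝ} {C t : ℝ} (ha : ∀ n, |a n| ≤ C) (ht : |t| < 1) :
    Summable fun n => a n * t ^ n := by
  refine Summable.of_norm_bounded ((summable_geometric_of_lt_one (abs_nonneg t) ht).mul_left C)
    fun n => ?_
  rw [norm_mul, norm_pow, Real.norm_eq_abs, Real.norm_eq_abs]
  exact mul_le_mul_of_nonneg_right (ha n) (by positivity)

theorem continuousAt_tsum_mul_pow_of_abs_le {a : ℕ → ℝ} {C t : ℝ} (ha : ∀ n, |a n| ≤ C)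
    (ht : |t| < 1) : ContinuousAt (fun t => ∑' n, a n * t ^ n) t := by
  obtain ⟨ρ, htρ, hρ⟩ := exists_between ht
  have hρ₀ : 0 ≤ ρ := (abs_nonneg t).trans htρ.le
  refine ContinuousOn.continuousAt (s := Ioo (-ρ) ρ) ?_ (Ioo_mem_nhds (by linarith [neg_abs_le t])
    (lt_of_le_of_lt (le_abs_self t) htρ))
  refine continuousOn_tsum (fun n => by fun_prop)
    ((summable_geometric_of_lt_one hρ₀ hρ).mul_left C) fun n x hx => ?_
  rw [norm_mul, norm_pow, Real.norm_eq_abs, Real.norm_eq_abs]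
  exact mul_le_mul (ha n) (pow_le_pow_left₀ (abs_nonneg x) (abs_lt.2 hx).le n) (by positivity)
    ((abs_nonneg _).trans (ha n))

theorem tsum_mul_pow_zero (a : ℕ → ℝ) : ∑' n, a n * 0 ^ n = a 0 := by
  rw [tsum_eq_single 0 fun n hn => by simp [zero_pow hn]]
  simp

theorem tendsto_tsum_mul_pow_atTop_of_not_summable {c : ℕ → ℝ} (hc : ∀ n, 0 ≤ c n)
    (hns : ¬Summable c) (hs : ∀ t ∈ Ioo (0 : ℝ) 1, Summable fun n => c n * t ^ n) :
    Tendsto (fun t => ∑' n, c n * t ^ n) (𝓝[<] 1) atTop := by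
  refine tendsto_atTop.2 fun C => ?_
  obtain ⟨N, hN⟩ := (((not_summable_iff_tendsto_nat_atTop_of_nonneg hc).1 hns).eventually_gt_atTop
    C).exists
  have hpartial : Tendsto (fun t : ℝ => ∑ n ∈ Finset.range N, c n * t ^ n) (𝓝[<] 1)
      (𝓝 (∑ n ∈ Finset.range N, c n)) := by
    have hcont : Continuous fun t : ℝ => ∑ n ∈ Finset.range N, c n * t ^ n := by fun_prop
    simpa using (hcont.tendsto 1).mono_left nhdsWithin_le_nhds
  filter_upwards [hpartial.eventually_const_lt hN, Ioo_mem_nhdsLT one_pos] with t hCt ht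
  exact hCt.le.trans (Summable.sum_le_tsum _ (fun n _ => mul_nonneg (hc n) (pow_nonneg ht.1.le n))
    (hs t ht))

theorem pow_mul_pow_le_pow_mul_pow {x y : ℝ} (hx : 0 ≤ x) (hxy : x ≤ y) {m n : ℕ} (hmn : m ≤ n) :
    x ^ n * y ^ m ≤ x ^ m * y ^ n := by
  obtain ⟨k, rfl⟩ := Nat.exists_eq_add_of_le hmn
  have hy : 0 ≤ y := hx.trans hxy
  have hxy_pow : x ^ k ≤ y ^ k := pow_le_pow_left₀ hx hxy k
  calc x ^ (m + k) * y ^ m = x ^ m * y ^ m * x ^ k := by ring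
    _ ≤ x ^ m * y ^ m * y ^ k := by gcongr
    _ = x ^ m * y ^ (m + k) := by ring

theorem tsum_neg_of_add_swap_neg {α : Type*} {F : α × α → ℝ} (hF : Summable F)
    (hle : ∀ p, F p + F p.swap ≤ 0) {p₀ : α × α} (hlt : F p₀ + F p₀.swap < 0) :
    ∑' p, F p < 0 := by
  have hsum : ∑' p, (F p + F p.swap) < ∑' _ : α × α, (0 : ℝ) :=
    Summable.tsum_lt_tsum hle hlt (hF.add hF.prod_symm) summable_zero
  have hswap : ∑' p : α × α, F p.swap = ∑' p, F p := (Equiv.prodComm α α).tsum_eq F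
  rw [hF.tsum_add hF.prod_symm, hswap, tsum_zero] at hsum
  linarith

/-- Biernacki–Krzyż lemma. -/
theorem tsum_mul_pow_mul_lt_of_strictAnti_div {a b : ℕ → ℝ} (ha : ∀ n, 0 ≤ a n)
    (hb : ∀ n, 0 < b n) (hab : StrictAnti fun n => a n / b n) {x y : ℝ} (hx : 0 ≤ x) (hxy : x < y)
    (hax : Summable fun n => a n * x ^ n) (hay : Summable fun n => a n * y ^ n)
    (hbx : Summable fun n => b n * x ^ n) (hby : Summable fun n => b n * y ^ n) :
    (∑' n, a n * y ^ n) * (∑' n, b n * x ^ n) < (∑' n, a n * x ^ n) * (∑' n, b n * y ^ n) := by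
  have hy : 0 ≤ y := hx.trans hxy.le
  have hcross : ∀ {m n}, m < n → a n * b m < a m * b n := fun {m n} h => by
    have := hab h
    rwa [div_lt_div_iff₀ (hb n) (hb m)] at this
  have hyx := (hay.mul_of_nonneg hbx (fun n => mul_nonneg (ha n) (pow_nonneg hy n))
    fun n => mul_nonneg (hb n).le (pow_nonneg hx n))
  have hxy' := (hax.mul_of_nonneg hby (fun n => mul_nonneg (ha n) (pow_nonneg hx n))
    fun n => mul_nonneg (hb n).le (pow_nonneg hy n))
  set F : ℕ × ℕ → ℝ := fun p =>
    a p.1 * y ^ p.1 * (b p.2 * x ^ p.2) - a p.1 * x ^ p.1 * (b p.2 * y ^ p.2)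
  have hpair : ∀ m n, F (m, n) + F (n, m) =
      (a n * b m - a m * b n) * (x ^ m * y ^ n - x ^ n * y ^ m) := fun m n => by
    simp only [F]; ring
  have hle : ∀ p : ℕ × ℕ, F p + F p.swap ≤ 0 := by
    rintro ⟨m, n⟩
    wlog hmn : m ≤ n generalizing m n
    · have := this n m (le_of_not_ge hmn)
      rw [Prod.swap_prod_mk] at this ⊢
      rwa [add_comm]
    rw [Prod.swap_prod_mk, hpair]
    rcases hmn.lt_or_eq with h | rfl
    · exact mul_nonpos_of_nonpos_of_nonneg (sub_nonpos.2 (hcross h).le)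
        (sub_nonneg.2 (pow_mul_pow_le_pow_mul_pow hx hxy.le h.le))
    · simp
  have hlt : F (0, 1) + F (0, 1).swap < 0 := by
    rw [Prod.swap_prod_mk, hpair]
    exact mul_neg_of_neg_of_pos (sub_neg.2 (hcross zero_lt_one)) (by simpa using hxy)
  have hF := tsum_neg_of_add_swap_neg (hyx.sub hxy') hle hlt
  rw [hyx.tsum_sub hxy', ← hay.tsum_mul_tsum hbx hyx, ← hax.tsum_mul_tsum hby hxy'] at hF
  linarith

theorem poch_succ (x : ℝ) (n : ℕ) : poch x (n + 1) = poch x n * (x + n) :=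
  ascPochhammer_succ_eval n x

theorem poch_sub_one_mul (x : ℝ) (n : ℕ) : poch (x - 1) n * (x - 1 + n) = (x - 1) * poch x n := by
  rw [← poch_succ, poch, ascPochhammer_succ_left]
  simp [poch]

namespace EllipticHalf

open scoped Nat

noncomputable def kCoeff (n : ℕ) : ℝ := poch (1 / 2) n * poch (1 / 2) n / (n ! : ℝ) ^ 2

noncomputable def eCoeff (n : ℕ) : ℝ := poch (1 / 2 - 1) n * poch (1 / 2) n / (n ! : ℝ) ^ 2

/-- The coefficient of `t ^ n` in `(K - E) / t` as a series in `t = r ^ 2`. -/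
noncomputable def dCoeff (n : ℕ) : ℝ := kCoeff (n + 1) - eCoeff (n + 1)

theorem kCoeff_zero : kCoeff 0 = 1 := by simp [kCoeff, poch]

theorem eCoeff_zero : eCoeff 0 = 1 := by simp [eCoeff, poch]

theorem kCoeff_succ (n : ℕ) : kCoeff (n + 1) = kCoeff n * ((2 * n + 1) / (2 * n + 2)) ^ 2 := by
  have hfac : (n ! : ℝ) ≠ 0 := by positivity
  simp only [kCoeff, poch_succ, Nat.factorial_succ, Nat.cast_mul, Nat.cast_succ]
  field_simp
  ring

theorem kCoeff_pos (n : ℕ) : 0 < kCoeff n := by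
  induction n with
  | zero => simp [kCoeff_zero]
  | succ n ih => rw [kCoeff_succ]; positivity

theorem kCoeff_mul_le_one (n : ℕ) : kCoeff n * (2 * n + 1) ≤ 1 := by
  induction n with
  | zero => simp [kCoeff_zero]
  | succ n ih =>
    rw [kCoeff_succ]
    push_cast
    calc kCoeff n * ((2 * n + 1) / (2 * n + 2)) ^ 2 * (2 * (n + 1) + 1)
        = kCoeff n * (2 * n + 1) * ((2 * n + 1) * (2 * n + 3) / (2 * n + 2) ^ 2) := by
          field_simp
          ring
      _ ≤ 1 * 1 := by
        gcongr
        rw [div_le_one (by positivity)]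
        nlinarith
      _ = 1 := one_mul 1

theorem one_le_kCoeff_mul (n : ℕ) : 1 ≤ kCoeff n * (4 * n + 1) := by
  induction n with
  | zero => simp [kCoeff_zero]
  | succ n ih =>
    rw [kCoeff_succ]
    push_cast
    calc (1 : ℝ) = 1 * 1 := (one_mul 1).symm
      _ ≤ kCoeff n * (4 * n + 1) *
          ((2 * n + 1) ^ 2 * (4 * n + 5) / ((2 * n + 2) ^ 2 * (4 * n + 1))) := by
        gcongr
        rw [one_le_div (by positivity)]
        nlinarith
      _ = kCoeff n * ((2 * n + 1) / (2 * n + 2)) ^ 2 * (4 * (n + 1) + 1) := by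
        field_simp
        ring

theorem kCoeff_le_one (n : ℕ) : kCoeff n ≤ 1 := by
  nlinarith [kCoeff_mul_le_one n, kCoeff_pos n]

theorem eCoeff_mul (n : ℕ) : eCoeff n * (2 * n - 1) = -kCoeff n := by
  have h := poch_sub_one_mul (1 / 2) n
  have hfac : (n ! : ℝ) ^ 2 ≠ 0 := by positivity
  rw [eCoeff, kCoeff, div_mul_eq_mul_div, neg_div', div_left_inj' hfac]
  linear_combination 2 * poch (1 / 2) n * h

theorem abs_eCoeff_le (n : ℕ) : |eCoeff n| ≤ kCoeff n := by
  have hn : 1 ≤ |(2 * n - 1 : ℝ)| := by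
    rcases n.eq_zero_or_pos with rfl | hn
    · norm_num
    · have : (1 : ℝ) ≤ n := by exact_mod_cast hn
      rw [abs_of_pos (by linarith)]
      linarith
  have h := congrArg abs (eCoeff_mul n)
  rw [abs_mul, abs_neg, abs_of_pos (kCoeff_pos n)] at h
  nlinarith [abs_nonneg (eCoeff n)]

theorem dCoeff_eq (n : ℕ) : dCoeff n = kCoeff n * ((2 * n + 1) / (2 * n + 2)) := by
  have h := eCoeff_mul (n + 1)
  have hodd : (2 * (n : ℝ) + 1) ≠ 0 := by positivity
  have he : eCoeff (n + 1) = -kCoeff (n + 1) / (2 * n + 1) := by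
    rw [eq_div_iff hodd, ← h]; push_cast; ring
  rw [dCoeff, he, kCoeff_succ]
  field_simp
  ring

theorem dCoeff_pos (n : ℕ) : 0 < dCoeff n := by
  rw [dCoeff_eq]; have := kCoeff_pos n; positivity

theorem dCoeff_zero : dCoeff 0 = 1 / 2 := by
  rw [dCoeff_eq, kCoeff_zero]; norm_num

theorem kCoeff_sub_dCoeff (n : ℕ) : kCoeff n - dCoeff n = kCoeff n / (2 * n + 2) := by
  rw [dCoeff_eq]; field_simp; ring

theorem dCoeff_le_kCoeff (n : ℕ) : dCoeff n ≤ kCoeff n := by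
  rw [← sub_nonneg, kCoeff_sub_dCoeff]
  have := kCoeff_pos n
  positivity

theorem strictAnti_kCoeff_div_dCoeff : StrictAnti fun n => kCoeff n / dCoeff n := by
  have h : ∀ n, kCoeff n / dCoeff n = 1 + 1 / (2 * n + 1) := fun n => by
    rw [dCoeff_eq]; have := kCoeff_pos n; field_simp; ring
  intro m n hmn
  simp only [h]
  have : (m : ℝ) < n := by exact_mod_cast hmn
  gcongr

theorem summable_kCoeff_sub_dCoeff : Summable fun n => kCoeff n - dCoeff n := by
  refine Summable.of_nonneg_of_le (fun n => sub_nonneg.2 (dCoeff_le_kCoeff n)) (fun n => ?_)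
    ((summable_nat_add_iff 1).2 (Real.summable_one_div_nat_pow.2 one_lt_two))
  rw [kCoeff_sub_dCoeff, div_le_div_iff₀ (by positivity) (by positivity)]
  push_cast
  nlinarith [kCoeff_mul_le_one n, kCoeff_pos n]

theorem not_summable_dCoeff : ¬Summable dCoeff := by
  intro hs
  refine Real.not_summable_one_div_natCast ((summable_nat_add_iff 1).1 ?_)
  refine (hs.mul_left 8).of_nonneg_of_le (fun n => by positivity) fun n => ?_
  have h : 8 * dCoeff n * (n + 1) = 4 * (kCoeff n * (2 * n + 1)) := by
    rw [dCoeff_eq]; field_simp; ring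
  rw [div_le_iff₀ (by positivity)]
  push_cast
  nlinarith [one_le_kCoeff_mul n, kCoeff_pos n]

theorem abs_kCoeff_le_one (n : ℕ) : |kCoeff n| ≤ 1 := by
  rw [abs_of_pos (kCoeff_pos n)]; exact kCoeff_le_one n

theorem abs_dCoeff_le_one (n : ℕ) : |dCoeff n| ≤ 1 := by
  rw [abs_of_pos (dCoeff_pos n)]; exact (dCoeff_le_kCoeff n).trans (kCoeff_le_one n)

noncomputable def kSeries (t : ℝ) : ℝ := ∑' n, kCoeff n * t ^ n

noncomputable def dSeries (t : ℝ) : ℝ := ∑' n, dCoeff n * t ^ n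

theorem Ka_half_eq (r : ℝ) : Ka (1 / 2) r = π / 2 * kSeries (r ^ 2) := by
  norm_num only [Ka, kSeries, kCoeff, pow_mul]

theorem Ka_sub_Ea_half_eq {r : ℝ} (hr : |r| < 1) :
    Ka (1 / 2) r - Ea (1 / 2) r = π / 2 * (r ^ 2 * dSeries (r ^ 2)) := by
  have ht : |r ^ 2| < 1 := by rw [abs_pow]; exact pow_lt_one₀ (abs_nonneg r) hr two_ne_zero
  have hk := summable_mul_pow_of_abs_le abs_kCoeff_le_one ht
  have he := summable_mul_pow_of_abs_le (fun n => (abs_eCoeff_le n).trans (kCoeff_le_one n)) ht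
  have hEa : Ea (1 / 2) r = π / 2 * ∑' n, eCoeff n * (r ^ 2) ^ n := by
    norm_num only [Ea, eCoeff, pow_mul]
  rw [Ka_half_eq, kSeries, hEa, ← mul_sub, ← hk.tsum_sub he, (hk.sub he).tsum_eq_zero_add]
  rw [dSeries, ← tsum_mul_left, kCoeff_zero, eCoeff_zero, sub_self, zero_add]
  exact congrArg _ (tsum_congr fun n => by rw [dCoeff]; ring)

theorem sq_mul_Ka_div_Ka_sub_Ea_half {r : ℝ} (hr₀ : r ≠ 0) (hr : |r| < 1) :
    r ^ 2 * Ka (1 / 2) r / (Ka (1 / 2) r - Ea (1 / 2) r) = kSeries (r ^ 2) / dSeries (r ^ 2) := by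
  rw [Ka_sub_Ea_half_eq hr, Ka_half_eq, mul_left_comm, ← mul_assoc, ← mul_assoc]
  exact mul_div_mul_left _ _ (by positivity)

theorem dSeries_pos {t : ℝ} (ht₀ : 0 ≤ t) (ht : t < 1) : 0 < dSeries t :=
  (summable_mul_pow_of_abs_le abs_dCoeff_le_one (abs_lt.2 ⟨by linarith, ht⟩)).tsum_pos
    (fun n => mul_nonneg (dCoeff_pos n).le (pow_nonneg ht₀ n)) 0 (by simp [dCoeff_pos])

theorem strictAntiOn_kSeries_div_dSeries :
    StrictAntiOn (fun t => kSeries t / dSeries t) (Ico 0 1) := by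
  intro x ⟨hx₀, hx⟩ y ⟨hy₀, hy⟩ hxy
  have hsum {a : ℕ → ℝ} (ha : ∀ n, |a n| ≤ 1) {t : ℝ} (ht₀ : 0 ≤ t) (ht : t < 1) :=
    summable_mul_pow_of_abs_le ha (abs_lt.2 ⟨by linarith, ht⟩)
  rw [div_lt_div_iff₀ (dSeries_pos hy₀ hy) (dSeries_pos hx₀ hx)]
  exact tsum_mul_pow_mul_lt_of_strictAnti_div (fun n => (kCoeff_pos n).le) dCoeff_pos
    strictAnti_kCoeff_div_dCoeff hx₀ hxy (hsum abs_kCoeff_le_one hx₀ hx)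
    (hsum abs_kCoeff_le_one hy₀ hy) (hsum abs_dCoeff_le_one hx₀ hx) (hsum abs_dCoeff_le_one hy₀ hy)

theorem tendsto_kSeries_div_dSeries_zero :
    Tendsto (fun t => kSeries t / dSeries t) (𝓝 0) (𝓝 2) := by
  have h0 : |(0 : ℝ)| < 1 := by norm_num
  have hk := continuousAt_tsum_mul_pow_of_abs_le abs_kCoeff_le_one h0
  have hd := continuousAt_tsum_mul_pow_of_abs_le abs_dCoeff_le_one h0
  have hval : kSeries 0 / dSeries 0 = 2 := by
    rw [kSeries, dSeries, tsum_mul_pow_zero, tsum_mul_pow_zero, kCoeff_zero, dCoeff_zero]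
    norm_num
  rw [← hval]
  exact (hk.div hd (by simp [tsum_mul_pow_zero, dCoeff_zero])).tendsto

theorem tendsto_kSeries_div_dSeries_one :
    Tendsto (fun t => kSeries t / dSeries t) (𝓝[<] 1) (𝓝 1) := by
  have hunit : Ioo (0 : ℝ) 1 ∈ 𝓝[<] 1 := Ioo_mem_nhdsLT one_pos
  have hsum {a : ℕ → ℝ} (ha : ∀ n, |a n| ≤ 1) {t : ℝ} (ht : t ∈ Ioo (0 : ℝ) 1) :=
    summable_mul_pow_of_abs_le ha (abs_lt.2 ⟨by linarith [ht.1], ht.2⟩)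
  have hdiff : Tendsto (fun t => kSeries t - dSeries t) (𝓝[<] 1)
      (𝓝 (∑' n, (kCoeff n - dCoeff n))) := by
    refine (Real.tendsto_tsum_powerSeries_nhdsWithin_lt
      summable_kCoeff_sub_dCoeff.hasSum.tendsto_sum_nat).congr' ?_
    filter_upwards [hunit] with t ht
    rw [kSeries, dSeries, ← (hsum abs_kCoeff_le_one ht).tsum_sub (hsum abs_dCoeff_le_one ht)]
    exact tsum_congr fun n => sub_mul _ _ _
  have hD : Tendsto dSeries (𝓝[<] 1) atTop :=
    tendsto_tsum_mul_pow_atTop_of_not_summable (fun n => (dCoeff_pos n).le) not_summable_dCoeff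
      fun t ht => hsum abs_dCoeff_le_one ht
  have hlim := (hdiff.div_atTop hD).const_add 1
  rw [add_zero] at hlim
  refine hlim.congr' ?_
  filter_upwards [hunit] with t ht
  have := (dSeries_pos ht.1.le ht.2).ne'
  field_simp
  ring

end EllipticHalf

open EllipticHalf

theorem classical_f3 :
    StrictAntiOn (fun r : ℝ => r^2 * Ka (1/2) r / (Ka (1/2) r - Ea (1/2) r)) (Set.Ioo 0 1) ∧
    Filter.Tendsto (fun r : ℝ => r^2 * Ka (1/2) r / (Ka (1/2) r - Ea (1/2) r))
      (nhdsWithin 0 (Set.Ioi 0)) (nhds 2) ∧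
    Filter.Tendsto (fun r : ℝ => r^2 * Ka (1/2) r / (Ka (1/2) r - Ea (1/2) r))
      (nhdsWithin 1 (Set.Iio 1)) (nhds 1) := by
  have hEq : EqOn (fun r => kSeries (r ^ 2) / dSeries (r ^ 2))
      (fun r : ℝ => r^2 * Ka (1/2) r / (Ka (1/2) r - Ea (1/2) r)) (Ioo 0 1) := fun r hr =>
    (sq_mul_Ka_div_Ka_sub_Ea_half hr.1.ne' (abs_lt.2 ⟨by linarith [hr.1], hr.2⟩)).symm
  have hsq_mono : StrictMonoOn (fun r : ℝ => r ^ 2) (Ioo 0 1) := fun x hx y _ hxy =>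
    pow_lt_pow_left₀ hxy hx.1.le two_ne_zero
  have hsq_maps : MapsTo (fun r : ℝ => r ^ 2) (Ioo 0 1) (Ioo 0 1) := fun r hr =>
    ⟨pow_pos hr.1 2, pow_lt_one₀ hr.1.le hr.2 two_ne_zero⟩
  have hsq_one : Tendsto (fun r : ℝ => r ^ 2) (𝓝[<] 1) (𝓝[<] 1) :=
    tendsto_nhdsWithin_of_tendsto_nhds_of_eventually_within _
      (by simpa using ((continuous_pow 2).tendsto (1 : ℝ)).mono_left nhdsWithin_le_nhds)
      (eventually_of_mem (Ioo_mem_nhdsLT one_pos) fun r hr => (hsq_maps hr).2)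
  refine ⟨?_, ?_, ?_⟩
  · exact (strictAntiOn_kSeries_div_dSeries.comp_strictMonoOn hsq_mono
      (hsq_maps.mono_right Ioo_subset_Ico_self)).congr hEq
  · refine (((tendsto_kSeries_div_dSeries_zero.comp ?_).mono_left nhdsWithin_le_nhds)).congr'
      (eventuallyEq_of_mem (Ioo_mem_nhdsGT one_pos) hEq)
    simpa using (continuous_pow 2).tendsto (0 : ℝ)
  · exact (tendsto_kSeries_div_dSeries_one.comp hsq_one).congr'
      (eventuallyEq_of_mem (Ioo_mem_nhdsLT one_pos) hEq)
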